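/- In the game with rules a → ε, a^2 → ε, a^3 → ε, b → ε over {a,b}, with S(w) ∈ (ℤ/2)^3 defined as ((k + α_1) mod 2, α_2 mod 2, α_3 mod 2) from the block decomposition (α_r counting a-blocks of length ≡ r mod 4, k the number of b's), no single move changes S(w) by the vector (0,0,0) or by (1,1,1); equivalently, if w → w' then S(w') − S(w) ∉ {(0,0,0),(1,1,1)}. -/

import Mathlib

inductive AB | a | b
deriving DecidableEq

/-- One move of the game `{a → ε, a² → ε, a³ → ε, b → ε}`. -/
def Step (w w' : List AB) : Prop :=
  ∃ x y : List AB, w' = x ++ y ∧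
    (w = x ++ [AB.a] ++ y ∨ w = x ++ [AB.a, AB.a] ++ y ∨
     w = x ++ [AB.a, AB.a, AB.a] ++ y ∨ w = x ++ [AB.b] ++ y)

/-- The lengths `i_0, …, i_k` of the (possibly empty) maximal blocks of `a`'s in
the decomposition `w = a^{i_0} b a^{i_1} b ⋯ b a^{i_k}`. -/
def blocks (w : List AB) : List ℕ := (w.splitOn AB.b).map List.length

/-- `α_r`: the number of blocks of `a`'s whose length is `≡ r (mod 4)`. -/
def alpha (w : List AB) (r : ℕ) : ℕ := (blocks w).countP (fun i => i % 4 == r)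

/-- `S(w) = ((k + α₁) mod 2, α₂ mod 2, α₃ mod 2)`, where `k = |w|_b`. -/
def S (w : List AB) : ZMod 2 × ZMod 2 × ZMod 2 :=
  (((w.count AB.b + alpha w 1 : ℕ) : ZMod 2),
   ((alpha w 2 : ℕ) : ZMod 2), ((alpha w 3 : ℕ) : ZMod 2))

/-! Write `e₁, e₂, e₃` for the standard basis of `(ℤ/2)³` and `e₀ = 0` (`e_r = blockWeight r`).
Then `S(w) = k e₁ + ∑ⱼ e_{iⱼ mod 4}`. Deleting `a^m` (`m = 1, 2, 3`) from a block of length `i`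
changes `S` by `e_i - e_{i-m}` with distinct residues, a vector of weight 1 or 2. Deleting a `b`
between blocks `i` and `i'` changes `S` by `e₁ + e_i + e_{i'} + e_{i+i'}`, which a check of the
16 residue pairs shows is never `0` or `(1,1,1)`. To locate the block that a deletion inside
`x ++ _ ++ y` touches, note that prepending a `b` makes the first blocks equal, after which
prepending letters changes both words' `S` alike: only the final run `a^n` of `x` matters. -/

def blockWeight (r : ZMod 4) : ZMod 2 × ZMod 2 × ZMod 2 :=
  (if r = 1 then 1 else 0, if r = 2 then 1 else 0, if r = 3 then 1 else 0)

@[simp] lemma blockWeight_zero : blockWeight 0 = 0 := rfl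

lemma blockWeight_natCast (i : ℕ) :
    blockWeight i = ((if i % 4 = 1 then 1 else 0), (if i % 4 = 2 then 1 else 0),
      (if i % 4 = 3 then 1 else 0)) := by
  rw [← ZMod.natCast_mod i 4]
  have hi : i % 4 < 4 := Nat.mod_lt _ (by norm_num)
  interval_cases i % 4 <;> rfl

lemma countP_mod_four_eq_sum_blockWeight (l : List ℕ) :
    (((l.countP (· % 4 == 1) : ℕ) : ZMod 2), ((l.countP (· % 4 == 2) : ℕ) : ZMod 2),
      ((l.countP (· % 4 == 3) : ℕ) : ZMod 2)) = (l.map fun i : ℕ => blockWeight i).sum := by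
  induction l with
  | nil => rfl
  | cons i l ih =>
    rw [List.map_cons, List.sum_cons, ← ih, blockWeight_natCast]
    simp only [List.countP_cons, beq_iff_eq]
    ext <;> split_ifs <;> simp [add_comm]

lemma S_eq_add_sum_blockWeight (w : List AB) :
    S w = ((w.count AB.b : ZMod 2), 0, 0) + ((blocks w).map fun i : ℕ => blockWeight i).sum := by
  rw [← countP_mod_four_eq_sum_blockWeight]
  ext <;> simp [S, alpha]

def headBlock (w : List AB) : ℕ := (blocks w).headI

lemma blocks_cons_b (w : List AB) : blocks (AB.b :: w) = 0 :: blocks w := by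
  simp [blocks, List.splitOn_cons_eq_if_modifyHead]

lemma blocks_cons_a (w : List AB) :
    blocks (AB.a :: w) = (headBlock w + 1) :: (blocks w).tail := by
  obtain ⟨l, ls, h⟩ := List.exists_cons_of_ne_nil (List.splitOn_ne_nil AB.b w)
  simp [blocks, headBlock, List.splitOn_cons_eq_if_modifyHead, h]

lemma blocks_eq_headBlock_cons_tail (w : List AB) : blocks w = headBlock w :: (blocks w).tail := by
  obtain ⟨l, ls, h⟩ := List.exists_cons_of_ne_nil (List.splitOn_ne_nil AB.b w)
  simp [blocks, headBlock, h]

@[simp] lemma headBlock_cons_a (w : List AB) : headBlock (AB.a :: w) = headBlock w + 1 := by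
  simp [headBlock, blocks_cons_a]

@[simp] lemma headBlock_cons_b (w : List AB) : headBlock (AB.b :: w) = 0 := by
  simp [headBlock, blocks_cons_b]

lemma S_cons_a (w : List AB) :
    S (AB.a :: w) = S w + blockWeight ((headBlock w + 1 : ℕ)) - blockWeight (headBlock w) := by
  rw [S_eq_add_sum_blockWeight, S_eq_add_sum_blockWeight w, blocks_cons_a,
    blocks_eq_headBlock_cons_tail w, List.count_cons_of_ne (by decide)]
  simp only [List.map_cons, List.sum_cons, List.tail_cons]
  abel

lemma S_cons_b (w : List AB) : S (AB.b :: w) = S w + (1, 0, 0) := by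
  rw [S_eq_add_sum_blockWeight, S_eq_add_sum_blockWeight w, blocks_cons_b, List.count_cons_self]
  ext <;> simp [add_right_comm]

lemma headBlock_replicate_append (n : ℕ) (w : List AB) :
    headBlock (List.replicate n AB.a ++ w) = headBlock w + n := by
  induction n with
  | zero => rfl
  | succ n ih => rw [List.replicate_succ, List.cons_append, headBlock_cons_a, ih, add_assoc]

lemma S_replicate_append (n : ℕ) (w : List AB) :
    S (List.replicate n AB.a ++ w) =
      S w + blockWeight ((headBlock w + n : ℕ)) - blockWeight (headBlock w) := by
  induction n with
  | zero => simp
  | succ n ih =>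
    rw [List.replicate_succ, List.cons_append, S_cons_a, ih, headBlock_replicate_append, add_assoc]
    abel

lemma headBlock_append_eq {u v : List AB} (h : headBlock u = headBlock v) (x : List AB) :
    headBlock (x ++ u) = headBlock (x ++ v) := by
  induction x with
  | nil => exact h
  | cons c x ih => cases c <;> simp [ih]

lemma S_append_sub_S_append_of_headBlock_eq {u v : List AB} (h : headBlock u = headBlock v)
    (x : List AB) :
    S (x ++ u) - S (x ++ v) = S u - S v := by
  induction x with
  | nil => rfl
  | cons c x ih =>
    cases c
    · rw [List.cons_append, List.cons_append, S_cons_a, S_cons_a, headBlock_append_eq h x, ← ih]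
      abel
    · rw [List.cons_append, List.cons_append, S_cons_b, S_cons_b, ← ih]
      abel

lemma exists_S_append_sub_S_append_eq_replicate (x u v : List AB) :
    ∃ n, S (x ++ u) - S (x ++ v) =
      S (List.replicate n AB.a ++ u) - S (List.replicate n AB.a ++ v) := by
  induction x using List.reverseRecOn generalizing u v with
  | nil => exact ⟨0, rfl⟩
  | append_singleton x c ih =>
    cases c
    · obtain ⟨n, hn⟩ := ih (AB.a :: u) (AB.a :: v)
      refine ⟨n + 1, ?_⟩
      simpa [List.replicate_succ'] using hn
    · refine ⟨0, ?_⟩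
      have h : headBlock (AB.b :: u) = headBlock (AB.b :: v) := by simp
      rw [List.append_assoc, List.append_assoc, List.singleton_append, List.singleton_append,
        S_append_sub_S_append_of_headBlock_eq h, S_cons_b, S_cons_b]
      simp

lemma blockWeight_sub_blockWeight_add_ne {s : ZMod 4} (hs : s ≠ 0) (r : ZMod 4) :
    blockWeight r - blockWeight (r + s) ≠ (0, 0, 0) ∧
      blockWeight r - blockWeight (r + s) ≠ (1, 1, 1) := by
  revert r s; decide

lemma blockWeight_add_sub_blockWeight_sub_blockWeight_sub_ne (r s : ZMod 4) :
    blockWeight (r + s) - blockWeight r - blockWeight s - (1, 0, 0) ≠ (0, 0, 0) ∧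
      blockWeight (r + s) - blockWeight r - blockWeight s - (1, 0, 0) ≠ (1, 1, 1) := by
  revert r s; decide

lemma S_sub_S_ne_of_delete_replicate (x y : List AB) {m : ℕ} (hm : (m : ZMod 4) ≠ 0) :
    S (x ++ y) - S (x ++ List.replicate m AB.a ++ y) ≠ (0, 0, 0) ∧
      S (x ++ y) - S (x ++ List.replicate m AB.a ++ y) ≠ (1, 1, 1) := by
  obtain ⟨n, hn⟩ := exists_S_append_sub_S_append_eq_replicate x y (List.replicate m AB.a ++ y)
  have hd : S (x ++ y) - S (x ++ List.replicate m AB.a ++ y) =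
      blockWeight ((headBlock y + n : ℕ)) - blockWeight ((headBlock y + n : ℕ) + m) := by
    rw [List.append_assoc, hn, ← List.append_assoc, ← List.replicate_add, S_replicate_append,
      S_replicate_append, ← add_assoc]
    push_cast
    abel
  rw [hd]
  exact blockWeight_sub_blockWeight_add_ne hm _

lemma S_sub_S_ne_of_delete_b (x y : List AB) :
    S (x ++ y) - S (x ++ [AB.b] ++ y) ≠ (0, 0, 0) ∧
      S (x ++ y) - S (x ++ [AB.b] ++ y) ≠ (1, 1, 1) := by
  obtain ⟨n, hn⟩ := exists_S_append_sub_S_append_eq_replicate x y (AB.b :: y)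
  have hd : S (x ++ y) - S (x ++ [AB.b] ++ y) =
      blockWeight (headBlock y + n) - blockWeight (headBlock y) - blockWeight n - (1, 0, 0) := by
    rw [List.append_assoc, List.singleton_append, hn, S_replicate_append, S_replicate_append,
      S_cons_b, headBlock_cons_b]
    push_cast
    simp only [zero_add, blockWeight_zero]
    abel
  rw [hd]
  exact blockWeight_add_sub_blockWeight_sub_blockWeight_sub_ne _ _

theorem stmt13 :
    ∀ w w' : List AB, Step w w' →
      S w' - S w ≠ (0, 0, 0) ∧ S w' - S w ≠ (1, 1, 1) := by
  rintro w w' ⟨x, y, rfl, hw⟩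
  rcases hw with rfl | rfl | rfl | rfl
  · exact S_sub_S_ne_of_delete_replicate x y (m := 1) (by decide)
  · exact S_sub_S_ne_of_delete_replicate x y (m := 2) (by decide)
  · exact S_sub_S_ne_of_delete_replicate x y (m := 3) (by decide)
  · exact S_sub_S_ne_of_delete_b x y
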